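/- Let f : ℝ^m → ℝ be differentiable, ρ : ℝ^m → [0,∞) a probability density with μ ↦ ∇f(μ)∇f(μ)ᵀ ρ(μ) integrable, Σ = ∫ ∇f ∇fᵀ ρ dμ, and let w be a unit eigenvector of Σ with eigenvalue 0. Then the directional derivative ⟨∇f(μ), w⟩ vanishes for almost every μ with respect to the measure ρ(μ) dμ; i.e. directions in the kernel of Σ are directions along which f is almost everywhere flat. -/

import Mathlib

/-!
Testing the quadratic form of `Σ` at `w` gives `wᵀ Σ w = ∫ ⟪∇f, w⟫² ρ`. A nonnegative integrand
with integral zero vanishes almost everywhere, so `⟪∇f, w⟫ = 0` almost everywhere on `{ρ > 0}`,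
which is exactly almost everywhere for `ρ(μ) dμ`.
-/

open MeasureTheory Matrix

noncomputable def weightedSecondMoment {α ι : Type*} [MeasurableSpace α]
    (g : α → EuclideanSpace ℝ ι) (ρ : α → ℝ) (μ : Measure α) : Matrix ι ι ℝ :=
  of fun i j => ∫ x, g x i * g x j * ρ x ∂μ

section

variable {α ι : Type*} [MeasurableSpace α] [Fintype ι] {μ : Measure α}
  {g : α → EuclideanSpace ℝ ι} {ρ : α → ℝ}

lemma inner_sq_mul_eq_sum (v w : EuclideanSpace ℝ ι) (r : ℝ) :
    inner ℝ v w ^ 2 * r = ∑ i, ∑ j, w i * w j * (v i * v j * r) := by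
  simp only [PiLp.inner_apply, RCLike.inner_apply, conj_trivial]
  rw [sq, Finset.sum_mul_sum, Finset.sum_mul]
  refine Finset.sum_congr rfl fun i _ => ?_
  rw [Finset.sum_mul]
  exact Finset.sum_congr rfl fun j _ => by ring

lemma dotProduct_weightedSecondMoment_mulVec (w : EuclideanSpace ℝ ι) :
    w ⬝ᵥ weightedSecondMoment g ρ μ *ᵥ w =
      ∑ i, ∑ j, w i * w j * ∫ x, g x i * g x j * ρ x ∂μ := by
  simp only [dotProduct, mulVec, weightedSecondMoment, of_apply, Finset.mul_sum]
  exact Finset.sum_congr rfl fun i _ => Finset.sum_congr rfl fun j _ => by ring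

lemma integrable_inner_sq_mul (hint : ∀ i j, Integrable (fun x => g x i * g x j * ρ x) μ)
    (w : EuclideanSpace ℝ ι) :
    Integrable (fun x => inner ℝ (g x) w ^ 2 * ρ x) μ := by
  simp only [inner_sq_mul_eq_sum]
  exact integrable_finsetSum _ fun i _ => integrable_finsetSum _ fun j _ =>
    (hint i j).const_mul _

lemma integral_inner_sq_mul (hint : ∀ i j, Integrable (fun x => g x i * g x j * ρ x) μ)
    (w : EuclideanSpace ℝ ι) :
    ∫ x, inner ℝ (g x) w ^ 2 * ρ x ∂μ = w ⬝ᵥ weightedSecondMoment g ρ μ *ᵥ w := by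
  simp only [inner_sq_mul_eq_sum, dotProduct_weightedSecondMoment_mulVec]
  rw [integral_finsetSum _ fun i _ => integrable_finsetSum _ fun j _ => (hint i j).const_mul _]
  refine Finset.sum_congr rfl fun i _ => ?_
  rw [integral_finsetSum _ fun j _ => (hint i j).const_mul _]
  exact Finset.sum_congr rfl fun j _ => integral_const_mul _ _

lemma ae_inner_eq_zero_of_weightedSecondMoment_mulVec_eq_zero
    (hint : ∀ i j, Integrable (fun x => g x i * g x j * ρ x) μ) (hρ : 0 ≤ᵐ[μ] ρ)
    {w : EuclideanSpace ℝ ι} (hw : weightedSecondMoment g ρ μ *ᵥ w = 0) :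
    ∀ᵐ x ∂μ, ρ x ≠ 0 → inner ℝ (g x) w = 0 := by
  have hzero : ∫ x, inner ℝ (g x) w ^ 2 * ρ x ∂μ = 0 := by
    rw [integral_inner_sq_mul hint, hw, dotProduct_zero]
  have hnonneg : 0 ≤ᵐ[μ] fun x => inner ℝ (g x) w ^ 2 * ρ x := by
    filter_upwards [hρ] with x hx using mul_nonneg (sq_nonneg _) hx
  filter_upwards [(integral_eq_zero_iff_of_nonneg_ae hnonneg
    (integrable_inner_sq_mul hint w)).mp hzero] with x hx hρx
  simpa [hρx] using hx

end

lemma MeasureTheory.ae_withDensity_ofReal_iff {α : Type*} [MeasurableSpace α] {μ : Measure α}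
    {ρ : α → ℝ} {p : α → Prop} (hρ : AEMeasurable ρ μ) :
    (∀ᵐ x ∂μ.withDensity fun x => ENNReal.ofReal (ρ x), p x) ↔ ∀ᵐ x ∂μ, 0 < ρ x → p x := by
  simp only [ae_withDensity_iff' hρ.ennreal_ofReal, ne_eq, ENNReal.ofReal_eq_zero, not_le]

theorem kernel_eigenvector_directional_derivative_ae_zero_general
    (m : ℕ)
    (g : EuclideanSpace ℝ (Fin m) → EuclideanSpace ℝ (Fin m))
    (ρ : EuclideanSpace ℝ (Fin m) → ℝ)
    (hρ_nonneg : ∀ μ, 0 ≤ ρ μ)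
    (hρ_prob : ∫ μ, ρ μ = 1)
    (hint : ∀ i j : Fin m, Integrable (fun μ => g μ i * g μ j * ρ μ))
    (S : Matrix (Fin m) (Fin m) ℝ)
    (hS : S = Matrix.of fun i j => ∫ μ, g μ i * g μ j * ρ μ)
    (w : EuclideanSpace ℝ (Fin m))
    (hw_ker : S.mulVec w = 0) :
    ∀ᵐ μ ∂(volume.withDensity fun μ => ENNReal.ofReal (ρ μ)),
      (inner ℝ (g μ) w : ℝ) = 0 := by
  have hρ_int : Integrable ρ := .of_integral_ne_zero (by simp [hρ_prob])
  rw [ae_withDensity_ofReal_iff hρ_int.aemeasurable]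
  filter_upwards [ae_inner_eq_zero_of_weightedSecondMoment_mulVec_eq_zero hint
    (ae_of_all _ hρ_nonneg) (hS ▸ hw_ker)] with x hx hρx
  exact hx hρx.ne'

/-- If `w` is a unit eigenvector of the uncentered covariance matrix
`Σ = ∫ ∇f ∇fᵀ ρ dμ` with eigenvalue `0`, then the directional derivative
`⟨∇f(μ), w⟩` vanishes for `ρ(μ) dμ`-almost every `μ`. -/
theorem kernel_eigenvector_directional_derivative_ae_zero
    (m : ℕ) (f : EuclideanSpace ℝ (Fin m) → ℝ)
    (g : EuclideanSpace ℝ (Fin m) → EuclideanSpace ℝ (Fin m))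
    (hf : ∀ μ, HasGradientAt f (g μ) μ)
    (ρ : EuclideanSpace ℝ (Fin m) → ℝ)
    (hρ_nonneg : ∀ μ, 0 ≤ ρ μ)
    (hρ_prob : ∫ μ, ρ μ = 1)
    (hint : ∀ i j : Fin m, Integrable (fun μ => g μ i * g μ j * ρ μ))
    (S : Matrix (Fin m) (Fin m) ℝ)
    (hS : S = Matrix.of fun i j => ∫ μ, g μ i * g μ j * ρ μ)
    (w : EuclideanSpace ℝ (Fin m))
    (hw_unit : ‖w‖ = 1)
    (hw_ker : S.mulVec w = 0) :
    ∀ᵐ μ ∂(volume.withDensity fun μ => ENNReal.ofReal (ρ μ)),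
      (inner ℝ (g μ) w : ℝ) = 0 :=
  kernel_eigenvector_directional_derivative_ae_zero_general m g ρ hρ_nonneg hρ_prob hint S hS w
    hw_ker
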